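/- arXiv:2603.19130 — 3 statements merged into one kernel-verified Lean document; each statement's English description precedes it below -/
import Mathlib

section
/- Let U be an (α, a, δ)-block-encoding of an n-qubit operator A and V a (β, b, ε)-block-encoding of an n-qubit operator B, i.e., ‖A − α(⟨0^a|⊗I)U(|0^a⟩⊗I)‖ ≤ δ and ‖B − β(⟨0^b|⊗I)V(|0^b⟩⊗I)‖ ≤ ε with ‖A‖ ≤ α, ‖B‖ ≤ β. Then the unitary (I_{2^b} ⊗ U)(I_{2^a} ⊗ V) (with appropriate ordering of registers) is an (αβ, a+b, αε+βδ)-block-encoding of AB. -/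
open Matrix
open scoped Matrix.Norms.L2Operator

lemma aux_corner {κ ι : Type*} [Fintype κ] [DecidableEq κ] [Nonempty κ] [Fintype ι] [DecidableEq ι]
    [Nonempty ι] (W : Matrix (κ × ι) (κ × ι) ℂ)
    (hW : W ∈ Matrix.unitaryGroup (κ × ι) ℂ) (e : κ) :
    ‖Matrix.of (fun i j : ι => W (e, i) (e, j))‖ ≤ 1 := by
  classical
  set P : Matrix ι (κ × ι) ℂ := Matrix.of (fun i p => if p = (e, i) then 1 else 0) with hP
  have hPW : Matrix.of (fun i j : ι => W (e, i) (e, j)) = P * W * Pᴴ := by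
    ext i j
    simp [hP, Matrix.mul_apply, Matrix.conjTranspose_apply, ite_mul, mul_ite,
      Finset.sum_ite_eq, Finset.sum_ite_eq']
  have hPPt : P * Pᴴ = (1 : Matrix ι ι ℂ) := by
    ext i j
    simp [hP, Matrix.mul_apply, Matrix.conjTranspose_apply, ite_mul, mul_ite,
      Finset.sum_ite_eq, Finset.sum_ite_eq', Matrix.one_apply, Prod.ext_iff, eq_comm, Fintype.sum_prod_type, ite_and]
  have h1 : ‖Pᴴᴴ * Pᴴ‖ = ‖Pᴴ‖ * ‖Pᴴ‖ := Matrix.l2_opNorm_conjTranspose_mul_self Pᴴ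
  rw [Matrix.conjTranspose_conjTranspose, hPPt, Matrix.l2_opNorm_conjTranspose] at h1
  have hone : ‖(1 : Matrix ι ι ℂ)‖ = 1 := norm_one
  have hPn : ‖P‖ = 1 := by
    nlinarith [norm_nonneg P]
  have hWn : ‖W‖ = 1 := CStarRing.norm_of_mem_unitary hW
  calc ‖Matrix.of (fun i j : ι => W (e, i) (e, j))‖ = ‖P * W * Pᴴ‖ := by rw [hPW]
    _ ≤ ‖P * W‖ * ‖Pᴴ‖ := Matrix.l2_opNorm_mul _ _
    _ ≤ ‖P‖ * ‖W‖ * ‖Pᴴ‖ := by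
        have := Matrix.l2_opNorm_mul P W
        have h2 : (0:ℝ) ≤ ‖Pᴴ‖ := norm_nonneg _
        nlinarith
    _ = 1 := by rw [Matrix.l2_opNorm_conjTranspose, hPn, hWn]; ring

/-- product of block encodings. If U is an (α,a,δ)-block-encoding of A
and V a (β,b,ε)-block-encoding of B, then (I_{2^b} ⊗ U)(I_{2^a} ⊗ V) (with the
registers ordered as: b-ancillas, a-ancillas, system) is an
(αβ, a+b, αε+βδ)-block-encoding of AB. -/
theorem stmt_8 (n a b : ℕ) (α β δ ε : ℝ)
    (A B : Matrix (Fin (2 ^ n)) (Fin (2 ^ n)) ℂ)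
    (U : Matrix (Fin (2 ^ a) × Fin (2 ^ n)) (Fin (2 ^ a) × Fin (2 ^ n)) ℂ)
    (V : Matrix (Fin (2 ^ b) × Fin (2 ^ n)) (Fin (2 ^ b) × Fin (2 ^ n)) ℂ)
    (hU : U ∈ Matrix.unitaryGroup (Fin (2 ^ a) × Fin (2 ^ n)) ℂ)
    (hV : V ∈ Matrix.unitaryGroup (Fin (2 ^ b) × Fin (2 ^ n)) ℂ)
    (hα : ‖Matrix.toEuclideanCLM (𝕜 := ℂ) A‖ ≤ α)
    (hβ : ‖Matrix.toEuclideanCLM (𝕜 := ℂ) B‖ ≤ β)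
    (hA : ‖Matrix.toEuclideanCLM (𝕜 := ℂ)
      (A - α • Matrix.of (fun i j : Fin (2 ^ n) => U (0, i) (0, j)))‖ ≤ δ)
    (hB : ‖Matrix.toEuclideanCLM (𝕜 := ℂ)
      (B - β • Matrix.of (fun i j : Fin (2 ^ n) => V (0, i) (0, j)))‖ ≤ ε)
    (Ut Vt : Matrix (Fin (2 ^ b) × Fin (2 ^ a) × Fin (2 ^ n))
      (Fin (2 ^ b) × Fin (2 ^ a) × Fin (2 ^ n)) ℂ)
    (hUt : ∀ p q, Ut p q =
      (if p.1 = q.1 then 1 else 0) * U (p.2.1, p.2.2) (q.2.1, q.2.2))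
    (hVt : ∀ p q, Vt p q =
      (if p.2.1 = q.2.1 then 1 else 0) * V (p.1, p.2.2) (q.1, q.2.2)) :
    ‖Matrix.toEuclideanCLM (𝕜 := ℂ)
      (A * B - (α * β) • Matrix.of (fun i j : Fin (2 ^ n) =>
        (Ut * Vt) (0, 0, i) (0, 0, j)))‖ ≤ α * ε + β * δ := by
  rw [← Matrix.cstar_norm_def] at hα hβ hA hB ⊢
  set Un : Matrix (Fin (2^n)) (Fin (2^n)) ℂ :=
    Matrix.of (fun i j : Fin (2 ^ n) => U (0, i) (0, j)) with hUn
  set Vn : Matrix (Fin (2^n)) (Fin (2^n)) ℂ :=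
    Matrix.of (fun i j : Fin (2 ^ n) => V (0, i) (0, j)) with hVn
  have key : Matrix.of (fun i j : Fin (2 ^ n) => (Ut * Vt) (0, 0, i) (0, 0, j)) = Un * Vn := by
    ext i j
    simp [hUn, hVn, Matrix.mul_apply, hUt, hVt, Fintype.sum_prod_type, ite_mul, mul_ite,
      Finset.sum_ite_eq, Finset.sum_ite_eq', Finset.mul_sum, Finset.sum_mul, eq_comm]
  rw [key]
  have decomp : A * B - (α * β) • (Un * Vn) = A * (B - β • Vn) + (A - α • Un) * (β • Vn) := by
    rw [mul_sub, sub_mul, Matrix.smul_mul, Matrix.mul_smul, Matrix.mul_smul, smul_smul]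
    abel
  rw [decomp]
  have hVn1 : ‖Vn‖ ≤ 1 := aux_corner V hV 0
  have hβ0 : (0:ℝ) ≤ β := le_trans (norm_nonneg _) hβ
  have hα0 : (0:ℝ) ≤ α := le_trans (norm_nonneg _) hα
  have hε0 : (0:ℝ) ≤ ε := le_trans (norm_nonneg _) hB
  have hδ0 : (0:ℝ) ≤ δ := le_trans (norm_nonneg _) hA
  have hbV : ‖β • Vn‖ ≤ β := by
    rw [norm_smul, Real.norm_eq_abs, abs_of_nonneg hβ0]
    nlinarith [norm_nonneg Vn]
  calc ‖A * (B - β • Vn) + (A - α • Un) * (β • Vn)‖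
      ≤ ‖A * (B - β • Vn)‖ + ‖(A - α • Un) * (β • Vn)‖ := norm_add_le _ _
    _ ≤ ‖A‖ * ‖B - β • Vn‖ + ‖A - α • Un‖ * ‖β • Vn‖ :=
        add_le_add (Matrix.l2_opNorm_mul _ _) (Matrix.l2_opNorm_mul _ _)
    _ ≤ α * ε + β * δ := by
        have := norm_nonneg (A * (B - β • Vn))
        nlinarith [norm_nonneg A, norm_nonneg (B - β • Vn), norm_nonneg (A - α • Un),
          norm_nonneg (β • Vn)]
end

section
/- Let U_A be an (α, m, ε_A)-block-encoding of A and U_B an (α, m, ε_B)-block-encoding of B, both n-qubit matrices. Then the unitary W = (H⊗I)(|0⟩⟨0|⊗U_A + |1⟩⟨1|⊗U_B)(H⊗I), where H is the Hadamard gate acting on one extra ancilla qubit, is a (2α, m+1, ε_A + ε_B)-block-encoding of A + B. -/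
open Matrix

/-- LCU sum. W = (H⊗I)(|0⟩⟨0|⊗U_A + |1⟩⟨1|⊗U_B)(H⊗I) is a
(2α, m+1, ε_A + ε_B)-block-encoding of A + B. -/
theorem stmt_9 (n m : ℕ) (α εA εB : ℝ)
    (A B : Matrix (Fin (2 ^ n)) (Fin (2 ^ n)) ℂ)
    (UA UB : Matrix (Fin (2 ^ m) × Fin (2 ^ n)) (Fin (2 ^ m) × Fin (2 ^ n)) ℂ)
    (hUA : UA ∈ Matrix.unitaryGroup (Fin (2 ^ m) × Fin (2 ^ n)) ℂ)
    (hUB : UB ∈ Matrix.unitaryGroup (Fin (2 ^ m) × Fin (2 ^ n)) ℂ)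
    (hαA : ‖Matrix.toEuclideanCLM (𝕜 := ℂ) A‖ ≤ α)
    (hαB : ‖Matrix.toEuclideanCLM (𝕜 := ℂ) B‖ ≤ α)
    (hA : ‖Matrix.toEuclideanCLM (𝕜 := ℂ)
      (A - α • Matrix.of (fun i j : Fin (2 ^ n) => UA (0, i) (0, j)))‖ ≤ εA)
    (hB : ‖Matrix.toEuclideanCLM (𝕜 := ℂ)
      (B - α • Matrix.of (fun i j : Fin (2 ^ n) => UB (0, i) (0, j)))‖ ≤ εB)
    (H : Matrix (Fin 2) (Fin 2) ℂ)
    (hH : H = ((Real.sqrt 2 : ℂ))⁻¹ • !![1, 1; 1, -1])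
    (ctrl HI W : Matrix (Fin 2 × Fin (2 ^ m) × Fin (2 ^ n))
      (Fin 2 × Fin (2 ^ m) × Fin (2 ^ n)) ℂ)
    (hctrl : ∀ p q, ctrl p q =
      if p.1 = q.1 then (if p.1 = 0 then UA p.2 q.2 else UB p.2 q.2) else 0)
    (hHI : ∀ p q, HI p q = (if p.2 = q.2 then 1 else 0) * H p.1 q.1)
    (hW : W = HI * ctrl * HI) :
    ‖Matrix.toEuclideanCLM (𝕜 := ℂ)
      (A + B - (2 * α) • Matrix.of (fun i j : Fin (2 ^ n) =>
        W (0, 0, i) (0, 0, j)))‖ ≤ εA + εB := by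
  have key : ∀ i j : Fin (2 ^ n), W (0, 0, i) (0, 0, j)
      = (2 : ℂ)⁻¹ * (UA (0, i) (0, j) + UB (0, i) (0, j)) := by
    intro i j
    subst hW
    simp only [Matrix.mul_apply, Fintype.sum_prod_type, hHI, hctrl]
    simp only [ite_mul, mul_ite, zero_mul, mul_zero, one_mul]
    have h2 : (Real.sqrt 2 : ℂ) * (Real.sqrt 2 : ℂ) = 2 := by
      rw [← Complex.ofReal_mul, Real.mul_self_sqrt (by norm_num)]
      norm_num
    have hinv : ((Real.sqrt 2 : ℂ))⁻¹ * ((Real.sqrt 2 : ℂ))⁻¹ = (2 : ℂ)⁻¹ := by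
      rw [← mul_inv, h2]
    simp [Fin.sum_univ_two, Prod.ext_iff, hH, Matrix.smul_apply, ite_and,
      Finset.sum_ite_eq, Finset.sum_ite_eq']
    ring_nf
    have hsq : ((Real.sqrt 2 : ℂ))⁻¹ ^ 2 = 1 / 2 := by
      rw [sq, hinv]; norm_num
    rw [hsq]; ring
  have hmat : A + B - (2 * α) • Matrix.of (fun i j : Fin (2 ^ n) =>
        W (0, 0, i) (0, 0, j))
      = (A - α • Matrix.of (fun i j : Fin (2 ^ n) => UA (0, i) (0, j)))
        + (B - α • Matrix.of (fun i j : Fin (2 ^ n) => UB (0, i) (0, j))) := by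
    ext i j
    simp only [Matrix.sub_apply, Matrix.add_apply, Matrix.smul_apply,
      Matrix.of_apply, key i j, Complex.real_smul]
    push_cast
    ring
  rw [hmat, map_add]
  exact le_trans (norm_add_le _ _) (add_le_add hA hB)
end

section
/- Let N = 2^n, let L be the N×N lower triangular all-ones matrix, let H^{⊗n} be the n-qubit Hadamard transform, and let Z_block be the 2^{2n+1} × 2^{2n+1} block-diagonal unitary diag(I_{2N}, Z_{2N}, Z_{2N}², …, Z_{2N}^{N−1}) where Z_{2N} is the cyclic downshift on 2N elements. Then the top-left N×N block of U_L = (H^{⊗n} ⊗ I_{2N}) Z_block (H^{⊗n} ⊗ I_{2N}), i.e., the entries ⟨0^n, 0, i| U_L |0^n, 0, j⟩ for 0 ≤ i, j ≤ N−1, equal (1/N) L_{ij}. Hence U_L is an (N, n+1, 0)-block-encoding of L. -/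
open Matrix

/-- with N = 2^n, U_L = (H^{⊗n} ⊗ I_{2N}) Z_block (H^{⊗n} ⊗ I_{2N})
has top-left N×N block equal to (1/N)·L, where L is the lower triangular all-ones
matrix; hence U_L is an (N, n+1, 0)-block-encoding of L. -/
theorem stmt_14 (n : ℕ)
    (Hn : Matrix (Fin (2 ^ n)) (Fin (2 ^ n)) ℝ)
    (hHn : ∀ i j, Hn i j = (Real.sqrt (2 ^ n))⁻¹ *
      (-1 : ℝ) ^ (∑ t ∈ Finset.range n, ((i : ℕ) >>> t) % 2 * (((j : ℕ) >>> t) % 2)))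
    (Zb HI UL : Matrix (Fin (2 ^ n) × Fin (2 ^ (n + 1)))
      (Fin (2 ^ n) × Fin (2 ^ (n + 1))) ℝ)
    (hZb : ∀ p q, Zb p q =
      if p.1 = q.1 ∧ (p.2 : ℕ) = ((q.2 : ℕ) + (p.1 : ℕ)) % 2 ^ (n + 1) then 1 else 0)
    (hHI : ∀ p q, HI p q = (if p.2 = q.2 then 1 else 0) * Hn p.1 q.1)
    (hUL : UL = HI * Zb * HI)
    (i j : Fin (2 ^ n)) :
    UL (0, ⟨(i : ℕ), by have := i.isLt; have : (2:ℕ) ^ n < 2 ^ (n + 1) :=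
        Nat.pow_lt_pow_succ (by norm_num); omega⟩)
       (0, ⟨(j : ℕ), by have := j.isLt; have : (2:ℕ) ^ n < 2 ^ (n + 1) :=
        Nat.pow_lt_pow_succ (by norm_num); omega⟩) =
      ((2 : ℝ) ^ n)⁻¹ * (if j ≤ i then 1 else 0) := by
  have hHn0 : ∀ k, Hn 0 k = (Real.sqrt (2 ^ n))⁻¹ := by
    intro k; simp [hHn]
  have hHnk0 : ∀ k, Hn k 0 = (Real.sqrt (2 ^ n))⁻¹ := by
    intro k; simp [hHn]
  subst hUL
  rw [Matrix.mul_apply]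
  simp_rw [Matrix.mul_apply, Finset.sum_mul, hHI, hZb, hHn0, hHnk0,
    Fintype.sum_prod_type, ite_mul, zero_mul, one_mul, mul_ite, mul_zero, mul_one]
  simp only [Finset.sum_ite_eq, Finset.sum_ite_eq', Finset.mem_univ, if_true]
  have h2N : (2:ℕ) ^ n < 2 ^ (n + 1) := Nat.pow_lt_pow_succ (by norm_num)
  conv_lhs => enter [2, x]; rw [Finset.sum_comm]
  simp only [Finset.sum_ite_eq', Finset.mem_univ, if_true]
  simp only [ite_and, Finset.sum_ite_eq', Finset.mem_univ, if_true, ite_mul, zero_mul]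
  have hs : (Real.sqrt (2 ^ n))⁻¹ * (Real.sqrt (2 ^ n))⁻¹ = ((2:ℝ) ^ n)⁻¹ := by
    rw [← mul_inv, Real.mul_self_sqrt (by positivity : (0:ℝ) ≤ 2 ^ n)]
  have hcond : ∀ x : Fin (2 ^ n),
      ((i : ℕ) = ((j : ℕ) + (x : ℕ)) % 2 ^ (n + 1)) ↔ (j ≤ i ∧ (x : ℕ) = (i : ℕ) - (j : ℕ)) := by
    intro x
    have hi := i.isLt; have hj := j.isLt; have hx := x.isLt
    rw [Nat.mod_eq_of_lt (by omega), Fin.le_def]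
    omega
  simp_rw [hcond]
  by_cases h : j ≤ i
  · rw [if_pos h]
    rw [Finset.sum_eq_single (⟨(i:ℕ) - (j:ℕ), by have := i.isLt; omega⟩ : Fin (2^n))]
    · simp [h, hs]
    · intro b _ hb
      rw [if_neg]
      rintro ⟨-, hb'⟩
      exact hb (Fin.ext hb')
    · simp
  · rw [if_neg h]
    refine Finset.sum_eq_zero fun x _ => ?_
    rw [if_neg (fun hx => h hx.1)]
end
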